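/- Let m ≥ 1 and n ≥ 1 be integers, let k : Fin m → ℕ with k_j ≥ 1 for all j and Σ_j k_j = n, and define F(υ,k) := 2^{−k}·(√((2^k−1)·υ) + √(1−υ))². For every ω̃ : Fin m → ℝ with ω̃_j ∈ [0, 1 − 2^{−k_j}] for all j, setting ω := 1 − Π_j (1 − ω̃_j) (so ω ∈ [0, 1 − 2^{−n}]), one has Π_j F(ω̃_j, k_j) ≤ F(ω, n). That is, the maximal success probability of any preparation that is separable across a partition of the n parties into m groups never exceeds the genuinely multipartite entangled bound pEnt(ω,n) at the same total energy ω. -/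
import Mathlib


open Finset

/-- `F(υ,k) = pEnt(υ,k) = 2^{−k}(√((2^k−1)υ) + √(1−υ))²`, the maximal success probability
for `k` parties sharing an entangled state with energy bound `υ`. -/
noncomputable def Fent (υ : ℝ) (k : ℕ) : ℝ :=
  (1 / (2 : ℝ) ^ k) * (Real.sqrt (((2 : ℝ) ^ k - 1) * υ) + Real.sqrt (1 - υ)) ^ 2

/-- Two-term Cauchy–Schwarz for square roots. -/
lemma cs2 {x1 x2 y1 y2 : ℝ} (hx1 : 0 ≤ x1) (hx2 : 0 ≤ x2) (hy1 : 0 ≤ y1) (hy2 : 0 ≤ y2) :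
    Real.sqrt (x1*y1) + Real.sqrt (x2*y2) ≤ Real.sqrt ((x1+x2)*(y1+y2)) := by
  have h1 : Real.sqrt (x1*y1) * Real.sqrt (x2*y2) = Real.sqrt (x1*y2) * Real.sqrt (x2*y1) := by
    rw [← Real.sqrt_mul (by positivity), ← Real.sqrt_mul (by positivity)]; ring_nf
  have h2 : 2 * (Real.sqrt (x1*y2) * Real.sqrt (x2*y1)) ≤ x1*y2 + x2*y1 := by
    nlinarith [sq_nonneg (Real.sqrt (x1*y2) - Real.sqrt (x2*y1)),
      Real.sq_sqrt (mul_nonneg hx1 hy2), Real.sq_sqrt (mul_nonneg hx2 hy1)]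
  have hnn : 0 ≤ Real.sqrt (x1*y1) + Real.sqrt (x2*y2) := by positivity
  rw [← Real.sqrt_sq hnn]
  apply Real.sqrt_le_sqrt
  have e1 := Real.sq_sqrt (mul_nonneg hx1 hy1)
  have e2 := Real.sq_sqrt (mul_nonneg hx2 hy2)
  nlinarith [h1, h2, e1, e2]

/-- Three-term Cauchy–Schwarz for square roots. -/
lemma cs3 {x1 x2 x3 y1 y2 y3 : ℝ} (hx1 : 0 ≤ x1) (hx2 : 0 ≤ x2) (hx3 : 0 ≤ x3)
    (hy1 : 0 ≤ y1) (hy2 : 0 ≤ y2) (hy3 : 0 ≤ y3) :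
    Real.sqrt (x1*y1) + Real.sqrt (x2*y2) + Real.sqrt (x3*y3)
      ≤ Real.sqrt ((x1+x2+x3)*(y1+y2+y3)) := by
  calc Real.sqrt (x1*y1) + Real.sqrt (x2*y2) + Real.sqrt (x3*y3)
      ≤ Real.sqrt ((x1+x2)*(y1+y2)) + Real.sqrt (x3*y3) := by
        gcongr ?_ + _; exact cs2 hx1 hx2 hy1 hy2
    _ ≤ Real.sqrt ((x1+x2+x3)*(y1+y2+y3)) := cs2 (by linarith) hx3 (by linarith) hy3

/-- `Fent` as the square of a fidelity-type expression. -/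
lemma Fent_eq_sq (υ : ℝ) (k : ℕ) :
    Fent υ k = (Real.sqrt ((1 - 1/2^k)*υ) + Real.sqrt ((1/2^k)*(1-υ)))^2 := by
  unfold Fent
  have h2 : (0:ℝ) < 2^k := by positivity
  have e1 : Real.sqrt ((1 - 1/(2:ℝ)^k)*υ)
      = Real.sqrt (1/2^k) * Real.sqrt (((2:ℝ)^k-1)*υ) := by
    rw [← Real.sqrt_mul (by positivity)]
    congr 1; field_simp
  have e2 : Real.sqrt ((1/(2:ℝ)^k)*(1-υ))
      = Real.sqrt (1/2^k) * Real.sqrt (1-υ) := Real.sqrt_mul (by positivity) _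
  rw [e1, e2, ← mul_add, mul_pow, Real.sq_sqrt (by positivity)]

lemma Fent_nonneg (υ : ℝ) (k : ℕ) : 0 ≤ Fent υ k := by
  unfold Fent; positivity

/-- The two-group merging step. -/
lemma Fent_step (a b : ℕ) {u v : ℝ} (hu0 : 0 ≤ u) (hu1 : u ≤ 1 - 1/2^a)
    (hv0 : 0 ≤ v) (hv1 : v ≤ 1 - 1/2^b) :
    Fent u a * Fent v b ≤ Fent (1 - (1-u)*(1-v)) (a+b) := by
  have hpa : (0:ℝ) < 2^a := by positivity
  have hpb : (0:ℝ) < 2^b := by positivity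
  have hα : (0:ℝ) ≤ 1 - 1/2^a := by
    rw [sub_nonneg, div_le_one hpa]; exact one_le_pow₀ (by norm_num)
  have hβ : (0:ℝ) ≤ 1 - 1/2^b := by
    rw [sub_nonneg, div_le_one hpb]; exact one_le_pow₀ (by norm_num)
  have hα' : (0:ℝ) ≤ 1/2^a := by positivity
  have hβ' : (0:ℝ) ≤ 1/2^b := by positivity
  have hu' : 0 ≤ 1 - u := by linarith
  have hv' : 0 ≤ 1 - v := by linarith
  rw [Fent_eq_sq, Fent_eq_sq, Fent_eq_sq, ← mul_pow]
  have hmain :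
      (Real.sqrt ((1 - 1/2^a)*u) + Real.sqrt ((1/2^a)*(1-u))) *
      (Real.sqrt ((1 - 1/2^b)*v) + Real.sqrt ((1/2^b)*(1-v)))
      ≤ Real.sqrt ((1 - 1/2^(a+b))*(1 - (1-u)*(1-v)))
        + Real.sqrt ((1/2^(a+b))*(1 - (1 - (1-u)*(1-v)))) := by
    rw [add_mul, mul_add, mul_add]
    rw [← Real.sqrt_mul (by positivity), ← Real.sqrt_mul (by positivity),
        ← Real.sqrt_mul (by positivity), ← Real.sqrt_mul (by positivity)]
    have e1 : (1 - 1/(2:ℝ)^a)*u * ((1 - 1/2^b)*v)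
        = ((1 - 1/2^a)*(1 - 1/2^b)) * (u*v) := by ring
    have e2 : (1 - 1/(2:ℝ)^a)*u * ((1/2^b)*(1-v))
        = ((1 - 1/2^a)*(1/2^b)) * (u*(1-v)) := by ring
    have e3 : (1/(2:ℝ)^a)*(1-u) * ((1 - 1/2^b)*v)
        = ((1/2^a)*(1 - 1/2^b)) * ((1-u)*v) := by ring
    have e4 : Real.sqrt ((1/(2:ℝ)^a)*(1-u) * ((1/2^b)*(1-v)))
        = Real.sqrt ((1/2^(a+b))*(1 - (1 - (1-u)*(1-v)))) := by
      congr 1; rw [pow_add]; ring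
    have e5 : (1 - 1/(2:ℝ)^(a+b))*(1 - (1-u)*(1-v))
        = (((1 - 1/2^a)*(1 - 1/2^b)) + ((1 - 1/2^a)*(1/2^b)) + ((1/2^a)*(1 - 1/2^b)))
          * ((u*v) + (u*(1-v)) + ((1-u)*v)) := by
      rw [pow_add]; field_simp; ring
    rw [e1, e2, e3, e4, e5]
    have h3 := cs3 (mul_nonneg hα hβ) (mul_nonneg hα hβ') (mul_nonneg hα' hβ)
      (mul_nonneg hu0 hv0) (mul_nonneg hu0 hv') (mul_nonneg hu' hv0)
    linarith [h3]
  exact pow_le_pow_left₀ (by positivity) hmain 2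

/-- Membership part of the merging step. -/
lemma energy_step (a b : ℕ) {u v : ℝ} (hu0 : 0 ≤ u) (hu1 : u ≤ 1 - 1/2^a)
    (hv0 : 0 ≤ v) (hv1 : v ≤ 1 - 1/2^b) :
    0 ≤ 1 - (1-u)*(1-v) ∧ 1 - (1-u)*(1-v) ≤ 1 - 1/2^(a+b) := by
  have hpa : (0:ℝ) < 2^a := by positivity
  have hpb : (0:ℝ) < 2^b := by positivity
  have hua : (1:ℝ)/2^a ≤ 1 - u := by linarith
  have hvb : (1:ℝ)/2^b ≤ 1 - v := by linarith
  have hu' : (0:ℝ) ≤ 1 - u := le_trans (by positivity) hua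
  have hv' : (0:ℝ) ≤ 1 - v := le_trans (by positivity) hvb
  have h1 : (1:ℝ)/2^(a+b) ≤ (1-u)*(1-v) := by
    rw [pow_add]
    calc (1:ℝ)/(2^a*2^b) = (1/2^a)*(1/2^b) := by ring
      _ ≤ (1-u)*(1-v) := by
          apply mul_le_mul hua hvb (by positivity) (by linarith)
  have h2 : (1-u)*(1-v) ≤ 1 := by nlinarith [mul_nonneg hu0 hv0]
  constructor <;> [linarith; linarith]

/-- Main inductive lemma (no constraints on `m` or the `k j` needed). -/
lemma key_lemma : ∀ (m : ℕ) (k : Fin m → ℕ) (w : Fin m → ℝ),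
    (∀ j, w j ∈ Set.Icc (0:ℝ) (1 - 1/2^(k j))) →
    (0 ≤ 1 - ∏ j, (1 - w j) ∧ 1 - ∏ j, (1 - w j) ≤ 1 - 1/2^(∑ j, k j)) ∧
    ∏ j, Fent (w j) (k j) ≤ Fent (1 - ∏ j, (1 - w j)) (∑ j, k j) := by
  intro m
  induction m with
  | zero =>
      intro k w _
      simp [Fent]
  | succ m ih =>
      intro k w hw
      obtain ⟨⟨h0, h1⟩, h2⟩ := ih (fun j => k j.succ) (fun j => w j.succ)
        (fun j => hw j.succ)
      have hw0 := hw 0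
      rw [Set.mem_Icc] at hw0
      set v : ℝ := 1 - ∏ j : Fin m, (1 - w j.succ) with hv
      have hprod : ∏ j : Fin (m+1), (1 - w j) = (1 - w 0) * (1 - v) := by
        rw [Fin.prod_univ_succ]; rw [hv]; ring_nf
      have hsum : ∑ j : Fin (m+1), k j = k 0 + ∑ j : Fin m, k j.succ :=
        Fin.sum_univ_succ k
      have hmem := energy_step (k 0) (∑ j : Fin m, k j.succ) hw0.1 hw0.2 h0 h1
      have hstep := Fent_step (k 0) (∑ j : Fin m, k j.succ) hw0.1 hw0.2 h0 h1
      refine ⟨⟨?_, ?_⟩, ?_⟩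
      · rw [hprod]; exact hmem.1
      · rw [hprod, hsum]; exact hmem.2
      · rw [Fin.prod_univ_succ, hprod, hsum]
        calc Fent (w 0) (k 0) * ∏ j : Fin m, Fent (w j.succ) (k j.succ)
            ≤ Fent (w 0) (k 0) * Fent v (∑ j : Fin m, k j.succ) := by
              exact mul_le_mul_of_nonneg_left h2 (Fent_nonneg _ _)
          _ ≤ Fent (1 - (1 - w 0) * (1 - v)) (k 0 + ∑ j : Fin m, k j.succ) := hstep

theorem partitioned_strategies_below_GME_bound (m n : ℕ) (hm : 1 ≤ m) (hn : 1 ≤ n)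
    (k : Fin m → ℕ) (hk : ∀ j, 1 ≤ k j) (hksum : ∑ j, k j = n)
    (w : Fin m → ℝ) (hw : ∀ j, w j ∈ Set.Icc (0 : ℝ) (1 - 1 / (2 : ℝ) ^ (k j))) :
    -- the total energy ω = 1 − Π_j (1 − w_j) lies in [0, 1 − 2^{−n}]
    (1 - ∏ j, (1 - w j)) ∈ Set.Icc (0 : ℝ) (1 - 1 / (2 : ℝ) ^ n) ∧
    -- and the partitioned success probability never exceeds the GME bound
    ∏ j, Fent (w j) (k j) ≤ Fent (1 - ∏ j, (1 - w j)) n := by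
  obtain ⟨⟨h0, h1⟩, h2⟩ := key_lemma m k w hw
  rw [hksum] at h1 h2
  exact ⟨Set.mem_Icc.mpr ⟨h0, h1⟩, h2⟩
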